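/- Let p ∈ [1,∞), let I be a nonempty set, and let f, g ∈ ℓ^p(I)^+. Then f ≺ g and g ≺ f hold if and only if there exists a permutation operator P on ℓ^p(I) such that g = Pf. -/

import Mathlib

/-!
If `f = D g` and `g = E f` with `D`, `E` doubly stochastic, pick an integer `n ≥ max 2 p`, so that
`∑ fᵢⁿ` and `∑ gⱼⁿ` are finite. Jensen's inequality for `x ↦ xⁿ` along the rows of `D` gives
`fᵢⁿ ≤ ∑ⱼ dᵢⱼ gⱼⁿ`, and summing over `i` (columns of `D` sum to `1`) gives `∑ fⁿ ≤ ∑ gⁿ`;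
symmetrically `∑ gⁿ ≤ ∑ fⁿ`. Equality and strict convexity force `fᵢ = gⱼ` whenever `dᵢⱼ ≠ 0`.
So `D` only connects the level set `{g = t}` with `{f = t}`, which makes these level sets
equinumerous: by counting the mass of `D` on them when they are finite, and because rows of `D`
have countable support when they are infinite. Matching the level sets gives the permutation.
-/

open scoped ENNReal BigOperators

noncomputable section

/-- ℓᵖ(I) with real scalars. -/
abbrev Lp (I : Type*) (p : ℝ≥0∞) := lp (fun _ : I => ℝ) p

/-- The standard basis vector `e_j` of `ℓᵖ(I)`. -/
def stdVec {I : Type*} (p : ℝ≥0∞) (j : I) : Lp I p :=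
  haveI := Classical.decEq I
  lp.single p j 1

/-- A bounded operator on ℓᵖ(I) is positive if it maps the positive cone into itself. -/
def IsPos {I : Type*} {p : ℝ≥0∞} [Fact (1 ≤ p)] (A : Lp I p →L[ℝ] Lp I p) : Prop :=
  ∀ f : Lp I p, (∀ i, 0 ≤ f i) → ∀ i, 0 ≤ A f i

/-- Doubly stochastic operator on ℓᵖ(I). -/
def DoublyStochastic {I : Type*} {p : ℝ≥0∞} [Fact (1 ≤ p)]
    (A : Lp I p →L[ℝ] Lp I p) : Prop :=
  IsPos A ∧ (∀ i : I, HasSum (fun j : I => A (stdVec p j) i) 1)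
          ∧ (∀ j : I, HasSum (fun i : I => A (stdVec p j) i) 1)

/-- Doubly substochastic operator on ℓᵖ(I) (finite partial sums formulation). -/
def DoublySubstochastic {I : Type*} {p : ℝ≥0∞} [Fact (1 ≤ p)]
    (A : Lp I p →L[ℝ] Lp I p) : Prop :=
  IsPos A ∧ (∀ i : I, ∀ s : Finset I, ∑ j ∈ s, A (stdVec p j) i ≤ 1)
          ∧ (∀ j : I, ∀ s : Finset I, ∑ i ∈ s, A (stdVec p j) i ≤ 1)

/-- Increasable doubly substochastic operator on ℓᵖ(I). -/
def IncreasableDsS {I : Type*} {p : ℝ≥0∞} [Fact (1 ≤ p)]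
    (A : Lp I p →L[ℝ] Lp I p) : Prop :=
  IsPos A ∧ ∃ A₁ : Lp I p →L[ℝ] Lp I p, DoublyStochastic A₁ ∧
    ∀ i j : I, A (stdVec p j) i ≤ A₁ (stdVec p j) i

/-- Majorization: `f ≺ g`. -/
def Maj {I : Type*} {p : ℝ≥0∞} [Fact (1 ≤ p)] (f g : Lp I p) : Prop :=
  ∃ D : Lp I p →L[ℝ] Lp I p, DoublyStochastic D ∧ f = D g

/-- Weak majorization: `f ≺_w g`. -/
def MajW {I : Type*} {p : ℝ≥0∞} [Fact (1 ≤ p)] (f g : Lp I p) : Prop :=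
  ∃ D : Lp I p →L[ℝ] Lp I p, DoublySubstochastic D ∧ f = D g

/-- Submajorization: `f ≺_s g`. -/
def MajS {I : Type*} {p : ℝ≥0∞} [Fact (1 ≤ p)] (f g : Lp I p) : Prop :=
  ∃ D : Lp I p →L[ℝ] Lp I p, IncreasableDsS D ∧ f = D g

/-- Permutation operator on ℓᵖ(I). -/
def IsPermutationOp {I : Type*} {p : ℝ≥0∞} [Fact (1 ≤ p)]
    (P : Lp I p →L[ℝ] Lp I p) : Prop :=
  ∃ θ : I ≃ I, ∀ j : I, P (stdVec p j) = stdVec p (θ j)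

/-- `P` is the operator `P_θ` associated with the injection `θ : I → I`,
i.e. `P f = ∑_{k ∈ I} f(k) e_{θ(k)}`. -/
def IsPTheta {I : Type*} {p : ℝ≥0∞} [Fact (1 ≤ p)] (θ : I → I)
    (P : Lp I p →L[ℝ] Lp I p) : Prop :=
  (∀ f : Lp I p, ∀ k : I, P f (θ k) = f k) ∧
  (∀ f : Lp I p, ∀ i : I, i ∉ Set.range θ → P f i = 0)

/-- `T` preserves weak majorization on the positive cone. -/
def PreservesMajW {I : Type*} {p : ℝ≥0∞} [Fact (1 ≤ p)]
    (T : Lp I p →L[ℝ] Lp I p) : Prop :=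
  ∀ f g : Lp I p, (∀ i, 0 ≤ f i) → (∀ i, 0 ≤ g i) → MajW f g → MajW (T f) (T g)

/-- `T` preserves submajorization on the positive cone. -/
def PreservesMajS {I : Type*} {p : ℝ≥0∞} [Fact (1 ≤ p)]
    (T : Lp I p →L[ℝ] Lp I p) : Prop :=
  ∀ f g : Lp I p, (∀ i, 0 ≤ f i) → (∀ i, 0 ≤ g i) → MajS f g → MajS (T f) (T g)

end

universe u

structure IsDoublyStochastic {ι κ : Type*} (d : ι → κ → ℝ) : Prop where
  nonneg : ∀ i j, 0 ≤ d i j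
  hasSum_row : ∀ i, HasSum (d i) 1
  hasSum_col : ∀ j, HasSum (fun i => d i j) 1

section Tangent

variable {n : ℕ} {x y : ℝ}

theorem pow_add_mul_sub_lt_pow (hn : 2 ≤ n) (hx : 0 ≤ x) (hy : 0 ≤ y) (hxy : x ≠ y) :
    x ^ n + n * x ^ (n - 1) * (y - x) < y ^ n := by
  rcases hx.eq_or_lt with rfl | hx
  · simpa [zero_pow (show n ≠ 0 by omega), zero_pow (show n - 1 ≠ 0 by omega)] using
      pow_pos (hy.lt_of_ne hxy) n
  have hs : y / x - 1 ≠ 0 := by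
    rw [sub_ne_zero, ne_eq, div_eq_one_iff_eq hx.ne']
    exact Ne.symm hxy
  have bernoulli := one_add_mul_self_lt_rpow_one_add (by linarith [div_nonneg hy hx.le]) hs
    (p := n) (by exact_mod_cast hn)
  rw [add_sub_cancel, Real.rpow_natCast, div_pow, lt_div_iff₀ (pow_pos hx n)] at bernoulli
  have hxn : x ^ n = x ^ (n - 1) * x := by rw [← pow_succ, Nat.sub_add_cancel (by omega)]
  calc x ^ n + n * x ^ (n - 1) * (y - x) = (1 + n * (y / x - 1)) * x ^ n := by
        rw [hxn]; field_simp
    _ < y ^ n := bernoulli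

theorem pow_add_mul_sub_le_pow (hx : 0 ≤ x) (hy : 0 ≤ y) :
    x ^ n + n * x ^ (n - 1) * (y - x) ≤ y ^ n := by
  rcases hx.eq_or_lt with rfl | hx
  · rcases n with _ | _ | n <;> simp [pow_nonneg hy]
  have bernoulli := one_add_mul_sub_le_pow (by linarith [div_nonneg hy hx.le] : -1 ≤ y / x) n
  rw [div_pow, le_div_iff₀ (pow_pos hx n)] at bernoulli
  calc x ^ n + n * x ^ (n - 1) * (y - x) = (1 + n * (y / x - 1)) * x ^ n := by
        rcases n with _ | n
        · simp
        · rw [pow_succ, Nat.add_sub_cancel]; field_simp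
    _ ≤ y ^ n := bernoulli

end Tangent

section Jensen

variable {κ : Type*} {w g : κ → ℝ} {x : ℝ} {n : ℕ}

theorem hasSum_mul_pow_sub_tangent (hw : HasSum w 1) (hx : HasSum (fun j => w j * g j) x)
    (hs : Summable fun j => w j * g j ^ n) :
    HasSum (fun j => w j * (g j ^ n - (x ^ n + n * x ^ (n - 1) * (g j - x))))
      ((∑' j, w j * g j ^ n) - x ^ n) := by
  have hx' := (hx.sub (hw.mul_right x)).mul_left (n * x ^ (n - 1))
  have h := (hs.hasSum.sub (hw.mul_right (x ^ n))).sub hx'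
  rw [one_mul, one_mul, sub_self, mul_zero, sub_zero] at h
  exact h.congr_fun fun j => by ring

theorem pow_le_tsum_mul_pow (hw0 : ∀ j, 0 ≤ w j) (hw : HasSum w 1) (hg : ∀ j, 0 ≤ g j)
    (hx0 : 0 ≤ x) (hx : HasSum (fun j => w j * g j) x) (hs : Summable fun j => w j * g j ^ n) :
    x ^ n ≤ ∑' j, w j * g j ^ n := by
  have := (hasSum_mul_pow_sub_tangent hw hx hs).nonneg fun j =>
    mul_nonneg (hw0 j) (sub_nonneg.2 (pow_add_mul_sub_le_pow hx0 (hg j)))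
  linarith

theorem eq_of_pow_eq_tsum_mul_pow (hn : 2 ≤ n) (hw0 : ∀ j, 0 ≤ w j) (hw : HasSum w 1)
    (hg : ∀ j, 0 ≤ g j) (hx0 : 0 ≤ x) (hx : HasSum (fun j => w j * g j) x)
    (hs : Summable fun j => w j * g j ^ n) (heq : x ^ n = ∑' j, w j * g j ^ n) {j : κ}
    (hj : w j ≠ 0) : x = g j := by
  by_contra hne
  have hgap := hasSum_mul_pow_sub_tangent hw hx hs
  rw [← heq, sub_self] at hgap
  have hpos : 0 < w j * (g j ^ n - (x ^ n + n * x ^ (n - 1) * (g j - x))) :=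
    mul_pos ((hw0 j).lt_of_ne' hj) (sub_pos.2 (pow_add_mul_sub_lt_pow hn hx0 (hg j) hne))
  exact hpos.not_ge (le_hasSum hgap j fun k _ =>
    mul_nonneg (hw0 k) (sub_nonneg.2 (pow_add_mul_sub_le_pow hx0 (hg k))))

end Jensen

namespace IsDoublyStochastic

section Analytic

variable {ι κ : Type*} {d : ι → κ → ℝ}

theorem transpose (hd : IsDoublyStochastic d) : IsDoublyStochastic fun j i => d i j :=
  ⟨fun j i => hd.nonneg i j, hd.hasSum_col, hd.hasSum_row⟩

theorem le_one (hd : IsDoublyStochastic d) (i : ι) (j : κ) : d i j ≤ 1 :=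
  le_hasSum (hd.hasSum_col j) i fun i' _ => hd.nonneg i' j

theorem hasSum_tsum_mul (hd : IsDoublyStochastic d) {h : κ → ℝ} (h0 : ∀ j, 0 ≤ h j)
    (hs : Summable h) : HasSum (fun i => ∑' j, d i j * h j) (∑' j, h j) := by
  have hcol : ∀ j, HasSum (fun i => d i j * h j) (h j) := fun j => by
    simpa using (hd.hasSum_col j).mul_right (h j)
  have hswap : Summable fun x : κ × ι => d x.2 x.1 * h x.1 :=
    (summable_prod_of_nonneg fun x => mul_nonneg (hd.nonneg _ _) (h0 _)).2
      ⟨fun j => (hcol j).summable, by simpa only [(hcol _).tsum_eq] using hs⟩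
  have hprod : Summable fun x : ι × κ => d x.1 x.2 * h x.2 :=
    (Equiv.prodComm κ ι).summable_iff (f := fun x : ι × κ => d x.1 x.2 * h x.2) |>.1 hswap
  have htotal : ∑' x : ι × κ, d x.1 x.2 * h x.2 = ∑' j, h j :=
    ((Equiv.prodComm κ ι).tsum_eq (fun x : ι × κ => d x.1 x.2 * h x.2)).symm.trans
      (hswap.hasSum.prod_fiberwise hcol).tsum_eq.symm
  rw [← htotal]
  exact hprod.hasSum.prod_fiberwise fun i => (hprod.prod_factor i).hasSum

variable {f : ι → ℝ} {g : κ → ℝ} {n : ℕ}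

theorem summable_mul_pow (hd : IsDoublyStochastic d) (hg : ∀ j, 0 ≤ g j)
    (hgn : Summable fun j => g j ^ n) (i : ι) : Summable fun j => d i j * g j ^ n :=
  hgn.of_nonneg_of_le (fun j => mul_nonneg (hd.nonneg i j) (pow_nonneg (hg j) n))
    fun j => mul_le_of_le_one_left (pow_nonneg (hg j) n) (hd.le_one i j)

theorem pow_le_tsum_mul_pow (hd : IsDoublyStochastic d) (hf : ∀ i, 0 ≤ f i)
    (hg : ∀ j, 0 ≤ g j) (hgn : Summable fun j => g j ^ n)
    (hfg : ∀ i, HasSum (fun j => d i j * g j) (f i)) (i : ι) :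
    f i ^ n ≤ ∑' j, d i j * g j ^ n :=
  _root_.pow_le_tsum_mul_pow (hd.nonneg i) (hd.hasSum_row i) hg (hf i) (hfg i)
    (hd.summable_mul_pow hg hgn i)

theorem tsum_pow_le (hd : IsDoublyStochastic d) (hf : ∀ i, 0 ≤ f i) (hg : ∀ j, 0 ≤ g j)
    (hgn : Summable fun j => g j ^ n) (hfg : ∀ i, HasSum (fun j => d i j * g j) (f i)) :
    ∑' i, f i ^ n ≤ ∑' j, g j ^ n := by
  have hS := hd.hasSum_tsum_mul (fun j => pow_nonneg (hg j) n) hgn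
  have hle := hd.pow_le_tsum_mul_pow hf hg hgn hfg
  calc ∑' i, f i ^ n ≤ ∑' i, ∑' j, d i j * g j ^ n :=
        Summable.tsum_le_tsum hle
          (hS.summable.of_nonneg_of_le (fun i => pow_nonneg (hf i) n) hle) hS.summable
    _ = ∑' j, g j ^ n := hS.tsum_eq

theorem eq_of_tsum_pow_eq (hd : IsDoublyStochastic d) (hn : 2 ≤ n) (hf : ∀ i, 0 ≤ f i)
    (hg : ∀ j, 0 ≤ g j) (hgn : Summable fun j => g j ^ n)
    (hfg : ∀ i, HasSum (fun j => d i j * g j) (f i)) (heq : ∑' i, f i ^ n = ∑' j, g j ^ n) :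
    ∀ i j, d i j ≠ 0 → f i = g j := by
  intro i j hij
  have hS := hd.hasSum_tsum_mul (fun j => pow_nonneg (hg j) n) hgn
  have hle := hd.pow_le_tsum_mul_pow hf hg hgn hfg
  have hrow : f i ^ n = ∑' j, d i j * g j ^ n := by
    refine (hle i).antisymm (not_lt.1 fun hlt => heq.not_lt ?_)
    calc ∑' i, f i ^ n < ∑' i, ∑' j, d i j * g j ^ n :=
          Summable.tsum_lt_tsum hle hlt
            (hS.summable.of_nonneg_of_le (fun i => pow_nonneg (hf i) n) hle) hS.summable
      _ = ∑' j, g j ^ n := hS.tsum_eq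
  exact eq_of_pow_eq_tsum_mul_pow hn (hd.nonneg i) (hd.hasSum_row i) hg (hf i) (hfg i)
    (hd.summable_mul_pow hg hgn i) hrow hij

end Analytic

section Counting

variable {ι κ : Type u} {d : ι → κ → ℝ} {A : Set ι} {B : Set κ}

theorem tsum_ofReal_col (hd : IsDoublyStochastic d) (j : κ) :
    ∑' i, ENNReal.ofReal (d i j) = 1 := by
  rw [← ENNReal.ofReal_tsum_of_nonneg (fun i => hd.nonneg i j) (hd.hasSum_col j).summable,
    (hd.hasSum_col j).tsum_eq, ENNReal.ofReal_one]

theorem enatCard_le (hd : IsDoublyStochastic d) (hAB : ∀ i j, d i j ≠ 0 → j ∈ B → i ∈ A) :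
    ENat.card B ≤ ENat.card A := by
  rw [← ENat.toENNReal_le]
  calc (ENat.card B : ℝ≥0∞) = ∑' _ : B, (1 : ℝ≥0∞) := by rw [ENNReal.tsum_const, mul_one]
    _ = ∑' j : B, ∑' i : A, ENNReal.ofReal (d i j) := tsum_congr fun j => by
        rw [tsum_subtype_eq_of_support_subset (f := fun i => ENNReal.ofReal (d i j)),
          hd.tsum_ofReal_col]
        intro i hi
        exact hAB i j (fun h => hi (by simp [h])) j.2
    _ = ∑' i : A, ∑' j : B, ENNReal.ofReal (d i j) := ENNReal.tsum_comm
    _ ≤ ∑' i : A, ∑' j, ENNReal.ofReal (d i j) := ENNReal.tsum_le_tsum fun i =>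
        ENNReal.tsum_comp_le_tsum_of_injective Subtype.val_injective _
    _ = ∑' _ : A, (1 : ℝ≥0∞) := tsum_congr fun i => hd.transpose.tsum_ofReal_col i
    _ = ENat.card A := by rw [ENNReal.tsum_const, mul_one]

theorem mk_le_mk_of_infinite (hd : IsDoublyStochastic d)
    (hAB : ∀ i j, d i j ≠ 0 → j ∈ B → i ∈ A) (hA : A.Infinite) :
    Cardinal.mk B ≤ Cardinal.mk A := by
  have hcover : B ⊆ ⋃ i ∈ A, Function.support (d i) := by
    intro j hj
    obtain ⟨i, hi⟩ : ∃ i, d i j ≠ 0 := by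
      by_contra! h
      exact one_ne_zero ((hd.hasSum_col j).unique (by simp [h]))
    exact Set.mem_biUnion (hAB i j hi hj) hi
  have := hA.to_subtype
  calc Cardinal.mk B ≤ Cardinal.mk (⋃ i ∈ A, Function.support (d i)) :=
        Cardinal.mk_le_mk_of_subset hcover
    _ ≤ Cardinal.mk A * ⨆ i : A, Cardinal.mk (Function.support (d i)) :=
        Cardinal.mk_biUnion_le _ _
    _ ≤ Cardinal.mk A * Cardinal.aleph0 := by
        gcongr
        exact ciSup_le' fun i =>
          have := (hd.hasSum_row i).summable.countable_support.to_subtype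
          Cardinal.mk_le_aleph0
    _ = Cardinal.mk A := Cardinal.mul_aleph0_eq (Cardinal.aleph0_le_mk A)

theorem mk_le_mk (hd : IsDoublyStochastic d) (hAB : ∀ i j, d i j ≠ 0 → j ∈ B → i ∈ A) :
    Cardinal.mk B ≤ Cardinal.mk A := by
  by_cases hA : A.Finite
  · have := hA.to_subtype
    exact (Cardinal.toENat_le_iff_of_lt_aleph0 (Cardinal.lt_aleph0_of_finite A)).1
      (hd.enatCard_le hAB)
  · exact hd.mk_le_mk_of_infinite hAB hA

theorem exists_equiv_comp_eq (hd : IsDoublyStochastic d) {α : Type*} {f : ι → α} {g : κ → α}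
    (hfg : ∀ i j, d i j ≠ 0 → f i = g j) : ∃ θ : ι ≃ κ, ∀ i, g (θ i) = f i := by
  have fiber t : Nonempty ({i // f i = t} ≃ {j // g j = t}) :=
    Cardinal.eq.1 <| le_antisymm
      (hd.transpose.mk_le_mk (A := {j | g j = t}) fun j i hji hi => (hfg i j hji).symm.trans hi)
      (hd.mk_le_mk (A := {i | f i = t}) fun i j hij hj => (hfg i j hij).trans hj)
  exact ⟨Equiv.ofFiberEquiv fun t => (fiber t).some, Equiv.ofFiberEquiv_map _⟩

end Counting

end IsDoublyStochastic

section Operators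

variable {I : Type*} {p : ℝ≥0∞}

theorem stdVec_apply [DecidableEq I] (j i : I) : stdVec p j i = if i = j then 1 else 0 := by
  simp [stdVec, lp.single_apply, Pi.single_apply]

theorem stdVec_nonneg (j i : I) : 0 ≤ stdVec p j i := by
  classical
  rw [stdVec_apply]
  split_ifs <;> norm_num

theorem summable_pow_of_le {f : Lp I p} (hf : ∀ i, 0 ≤ f i) {n : ℕ} (hn : n ≠ 0)
    (hpn : p ≤ n) : Summable fun i => f i ^ n := by
  have := ((lp.memℓp f).of_exponent_ge hpn).summable (by simpa using Nat.pos_of_ne_zero hn)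
  simpa [Real.norm_of_nonneg (hf _)] using this

variable [Fact (1 ≤ p)]

theorem hasSum_mul_apply_stdVec (hp : p ≠ ∞) (A : Lp I p →L[ℝ] Lp I p) (h : Lp I p) (i : I) :
    HasSum (fun j => h j * A (stdVec p j) i) (A h i) := by
  -- the instance `stdVec` is built with, so that `lp.single` below unfolds to it
  let _ := Classical.decEq I
  refine ((lp.evalCLM ℝ _ p i).comp A).hasSum (lp.hasSum_single hp h) |>.congr_fun fun j => ?_
  have hsingle : lp.single p j (h j) = h j • stdVec p j := by
    rw [stdVec, ← lp.single_smul, smul_eq_mul, mul_one]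
  change _ = A (lp.single p j (h j)) i
  rw [hsingle, map_smul, lp.coeFn_smul, Pi.smul_apply, smul_eq_mul]

theorem ext_stdVec (hp : p ≠ ∞) {A B : Lp I p →L[ℝ] Lp I p}
    (h : ∀ j, A (stdVec p j) = B (stdVec p j)) : A = B := by
  ext f i
  refine (hasSum_mul_apply_stdVec hp A f i).unique ?_
  simpa only [h] using hasSum_mul_apply_stdVec hp B f i

theorem DoublyStochastic.isDoublyStochastic {D : Lp I p →L[ℝ] Lp I p} (hD : DoublyStochastic D) :
    IsDoublyStochastic fun i j => D (stdVec p j) i :=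
  ⟨fun i j => hD.1 _ (stdVec_nonneg j) i, hD.2.1, hD.2.2⟩

theorem Memℓp.comp_equiv {E : Type*} [NormedAddCommGroup E] {h : I → E} (hh : Memℓp h p)
    (hp : p ≠ ∞) (σ : I ≃ I) : Memℓp (h ∘ σ) p := by
  have hp₀ : 0 < p.toReal := ENNReal.toReal_pos (zero_lt_one.trans_le Fact.out).ne' hp
  exact memℓp_gen ((σ.summable_iff (f := fun i => ‖h i‖ ^ p.toReal)).2 (hh.summable hp₀))

variable (p) in
noncomputable def permOp (hp : p ≠ ∞) (σ : I ≃ I) : Lp I p →L[ℝ] Lp I p :=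
  LinearMap.mkContinuous
    { toFun h := ⟨h ∘ σ.symm, (lp.memℓp h).comp_equiv hp σ.symm⟩
      map_add' _ _ := rfl
      map_smul' _ _ := rfl }
    1 fun h => by
      have hp₀ : 0 < p.toReal := ENNReal.toReal_pos (zero_lt_one.trans_le Fact.out).ne' hp
      rw [one_mul]
      refine lp.norm_le_of_tsum_le hp₀ (norm_nonneg h) (le_of_eq ?_)
      rw [lp.norm_rpow_eq_tsum hp₀]
      exact σ.symm.tsum_eq fun i => ‖h i‖ ^ p.toReal

@[simp]
theorem permOp_apply (hp : p ≠ ∞) (σ : I ≃ I) (h : Lp I p) (i : I) :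
    permOp p hp σ h i = h (σ.symm i) := rfl

theorem permOp_stdVec (hp : p ≠ ∞) (σ : I ≃ I) (j : I) :
    permOp p hp σ (stdVec p j) = stdVec p (σ j) := by
  classical
  ext i
  simp only [permOp_apply, stdVec_apply, Equiv.symm_apply_eq]

theorem doublyStochastic_permOp (hp : p ≠ ∞) (σ : I ≃ I) : DoublyStochastic (permOp p hp σ) := by
  classical
  refine ⟨fun h hh i => hh _, fun i => ?_, fun j => ?_⟩
  · simpa [permOp_stdVec, stdVec_apply, Equiv.eq_symm_apply, eq_comm (a := i)] using
      hasSum_ite_eq (σ.symm i) (1 : ℝ)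
  · simpa [permOp_stdVec, stdVec_apply] using hasSum_ite_eq (σ j) (1 : ℝ)

theorem IsPermutationOp.exists_eq_permOp (hp : p ≠ ∞) {P : Lp I p →L[ℝ] Lp I p}
    (hP : IsPermutationOp P) : ∃ σ : I ≃ I, P = permOp p hp σ := by
  obtain ⟨σ, hσ⟩ := hP
  exact ⟨σ, ext_stdVec hp fun j => (hσ j).trans (permOp_stdVec hp σ j).symm⟩

end Operators

theorem stmt_6_general {I : Type*} (p : ℝ≥0∞) [Fact (1 ≤ p)] (hp : p ≠ ∞)
    (f g : Lp I p) (hf : ∀ i, 0 ≤ f i) (hg : ∀ i, 0 ≤ g i) :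
    (Maj f g ∧ Maj g f) ↔
      ∃ P : Lp I p →L[ℝ] Lp I p, IsPermutationOp P ∧ g = P f := by
  constructor
  · rintro ⟨⟨D, hD, hfD⟩, E, hE, hgE⟩
    obtain ⟨m, hm⟩ := ENNReal.exists_nat_gt hp
    have hpn : p ≤ (m + 2 : ℕ) := hm.le.trans (by exact_mod_cast (by omega : m ≤ m + 2))
    have hfn := summable_pow_of_le hf (by omega) hpn
    have hgn := summable_pow_of_le hg (by omega) hpn
    have hfg i : HasSum (fun j => D (stdVec p j) i * g j) (f i) := by
      simpa only [hfD, mul_comm] using hasSum_mul_apply_stdVec hp D g i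
    have hgf j : HasSum (fun i => E (stdVec p i) j * f i) (g j) := by
      simpa only [hgE, mul_comm] using hasSum_mul_apply_stdVec hp E f j
    have hd := hD.isDoublyStochastic
    have hK := hd.eq_of_tsum_pow_eq (by omega) hf hg hgn hfg
      ((hd.tsum_pow_le hf hg hgn hfg).antisymm (hE.isDoublyStochastic.tsum_pow_le hg hf hfn hgf))
    obtain ⟨θ, hθ⟩ := hd.exists_equiv_comp_eq hK
    refine ⟨permOp p hp θ, ⟨θ, permOp_stdVec hp θ⟩, lp.ext <| funext fun i => ?_⟩
    simpa using hθ (θ.symm i)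
  · rintro ⟨P, hP, rfl⟩
    obtain ⟨θ, rfl⟩ := hP.exists_eq_permOp hp
    exact ⟨⟨permOp p hp θ.symm, doublyStochastic_permOp hp θ.symm, by ext i; simp⟩,
      _, doublyStochastic_permOp hp θ, rfl⟩

theorem stmt_6 {I : Type*} [Nonempty I] (p : ℝ≥0∞) [Fact (1 ≤ p)] (hp : p ≠ ∞)
    (f g : Lp I p) (hf : ∀ i, 0 ≤ f i) (hg : ∀ i, 0 ≤ g i) :
    (Maj f g ∧ Maj g f) ↔
      ∃ P : Lp I p →L[ℝ] Lp I p, IsPermutationOp P ∧ g = P f :=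
  stmt_6_general p hp f g hf hg
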